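/- arXiv:2107.06951 — 3 statements merged into one kernel-verified Lean document; each statement's English description precedes it below -/
import Mathlib

section
/- For any string w, integer l ≥ 0, and alphabet character α: ℓ(w, α^l) = max(|w|, l) − min(N_α(w), l), where α^l is the string of l copies of α and N_α(w) is the number of occurrences of α in w. -/
/-- Cost structure for Levenshtein distance (formerly in Mathlib `Mathlib/Data/List/EditDistance/Defs.lean`). -/
structure Levenshtein.Cost (α β δ : Type*) where
  delete : α → δ
  insert : β → δ
  substitute : α → β → δ

/-- The default cost structure: every operation costs 1, substituting equal letters costs 0. -/
def Levenshtein.defaultCost {α : Type*} [DecidableEq α] : Levenshtein.Cost α α ℕ where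
  delete _ := 1
  insert _ := 1
  substitute a b := if a = b then 0 else 1

/-- Inner loop of the Levenshtein dynamic program (old Mathlib `Levenshtein.impl`). -/
def Levenshtein.impl {α β δ : Type*} [AddZeroClass δ] [Min δ] (C : Levenshtein.Cost α β δ)
    (xs : List α) (y : β) (d : {r : List δ // 0 < r.length}) : {r : List δ // 0 < r.length} :=
  let ⟨ds, w⟩ := d
  xs.zip (ds.zip ds.tail) |>.foldr
    (init := ⟨[C.insert y + ds.getLast (List.ne_nil_of_length_pos w)], by simp⟩)
    (fun ⟨x, d₀, d₁⟩ ⟨r, w⟩ =>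
      ⟨min (C.delete x + r[0]) (min (C.insert y + d₀) (C.substitute x y + d₁)) :: r, by simp⟩)

/-- Suffix Levenshtein distances (old Mathlib `suffixLevenshtein`). -/
def suffixLevenshtein {α β δ : Type*} [AddZeroClass δ] [Min δ] (C : Levenshtein.Cost α β δ)
    (xs : List α) (ys : List β) : {r : List δ // 0 < r.length} :=
  ys.foldr
    (Levenshtein.impl C xs)
    (xs.foldr (init := ⟨[0], by simp⟩) (fun a ⟨r, w⟩ => ⟨(C.delete a + r[0]) :: r, by simp⟩))

/-- Levenshtein distance with cost structure `C` (old Mathlib `levenshtein`). -/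
def levenshtein {α β δ : Type*} [AddZeroClass δ] [Min δ] (C : Levenshtein.Cost α β δ)
    (xs : List α) (ys : List β) : δ :=
  let ⟨r, _⟩ := suffixLevenshtein C xs ys
  r[0]

/-!
The right-hand side `max |w| l - min (N_α w) l` is the cost of the alignment that matches
`min (N_α w) l` letters `α` of `w` with the run, substitutes as many of the remaining letters as
possible and inserts or deletes the rest. Instead of proving that this alignment is optimal, we
check that the closed form satisfies the recurrence of the dynamic program,
`d (x :: w) (l + 1) = min (1 + d w (l + 1)) (min (1 + d (x :: w) l) ([x ≠ α] + d w l))`,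
with boundary values `d w 0 = |w|` and `d [] l = l`; that recurrence determines the distance.
-/

namespace Levenshtein

variable {α β δ : Type*} [AddZeroClass δ] [Min δ] (C : Cost α β δ)

theorem impl_cons (x : α) (xs : List α) (y : β) (d : δ) (ds : List δ)
    (w : 0 < (d :: ds).length) (w' : 0 < ds.length) :
    (impl C (x :: xs) y ⟨d :: ds, w⟩).1 =
      min (C.delete x + (impl C xs y ⟨ds, w'⟩).1[0]'(impl C xs y ⟨ds, w'⟩).2)
        (min (C.insert y + d) (C.substitute x y + ds[0])) :: (impl C xs y ⟨ds, w'⟩).1 := by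
  match ds, w' with
  | _ :: _, _ => rfl

theorem impl_length (xs : List α) (y : β) (d : {r : List δ // 0 < r.length})
    (w : d.1.length = xs.length + 1) :
    (impl C xs y d).1.length = xs.length + 1 := by
  induction xs generalizing d with
  | nil => rfl
  | cons x xs ih =>
    match d, w with
    | ⟨d₁ :: d₂ :: ds, _⟩, w =>
      rw [impl_cons C x xs y d₁ (d₂ :: ds) (by simp) (by simp), List.length_cons]
      exact congrArg (· + 1) (ih ⟨d₂ :: ds, by simp⟩ (by simpa using w))

end Levenshtein

open Levenshtein

section Recursion

variable {α β δ : Type*} [AddZeroClass δ] [Min δ] (C : Cost α β δ)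

theorem suffixLevenshtein_length (xs : List α) (ys : List β) :
    (suffixLevenshtein C xs ys).1.length = xs.length + 1 := by
  induction ys with
  | nil =>
    induction xs with
    | nil => rfl
    | cons _ xs ih => simpa [suffixLevenshtein] using ih
  | cons y ys ih => exact impl_length C xs y _ ih

theorem suffixLevenshtein_cons₁ (x : α) (xs : List α) (ys : List β) :
    suffixLevenshtein C (x :: xs) ys =
      ⟨levenshtein C (x :: xs) ys :: (suffixLevenshtein C xs ys).1, by simp⟩ := by
  induction ys with
  | nil => rfl
  | cons y ys ih =>
    have hcons := impl_cons C x xs y (levenshtein C (x :: xs) ys) _ (by simp)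
      (suffixLevenshtein C xs ys).2
    rw [← ih] at hcons
    apply Subtype.ext
    change (impl C (x :: xs) y (suffixLevenshtein C (x :: xs) ys)).1 =
      (impl C (x :: xs) y (suffixLevenshtein C (x :: xs) ys)).1[0]'(impl _ _ _ _).2 ::
        (impl C xs y (suffixLevenshtein C xs ys)).1
    simp only [hcons, List.getElem_cons_zero]

theorem levenshtein_nil_nil : levenshtein C ([] : List α) ([] : List β) = 0 := rfl

theorem levenshtein_cons_nil (x : α) (xs : List α) :
    levenshtein C (x :: xs) ([] : List β) = C.delete x + levenshtein C xs [] := rfl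

theorem levenshtein_nil_cons (y : β) (ys : List β) :
    levenshtein C ([] : List α) (y :: ys) = C.insert y + levenshtein C [] ys := by
  have hdef : levenshtein C ([] : List α) (y :: ys) =
      C.insert y + (suffixLevenshtein C ([] : List α) ys).1.getLast
        (List.ne_nil_of_length_pos (suffixLevenshtein C ([] : List α) ys).2) := rfl
  rw [hdef]
  change _ = C.insert y + (suffixLevenshtein C [] ys).1[0]'(suffixLevenshtein C [] ys).2
  have hl := suffixLevenshtein_length C ([] : List α) ys
  generalize suffixLevenshtein C ([] : List α) ys = S at hl ⊢
  match S, hl with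
  | ⟨[_], _⟩, _ => rfl

theorem levenshtein_cons_cons (x : α) (xs : List α) (y : β) (ys : List β) :
    levenshtein C (x :: xs) (y :: ys) =
      min (C.delete x + levenshtein C xs (y :: ys))
        (min (C.insert y + levenshtein C (x :: xs) ys)
          (C.substitute x y + levenshtein C xs ys)) := by
  have hdef : levenshtein C (x :: xs) (y :: ys) =
      (impl C (x :: xs) y (suffixLevenshtein C (x :: xs) ys)).1[0]'
        (impl C (x :: xs) y (suffixLevenshtein C (x :: xs) ys)).2 := rfl
  simp only [hdef, suffixLevenshtein_cons₁, impl_cons C x xs y _ _ _ (suffixLevenshtein C xs ys).2]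
  rfl

end Recursion

section DefaultCost

variable {α : Type*} [DecidableEq α]

theorem levenshtein_defaultCost_nil_left (ys : List α) :
    levenshtein defaultCost [] ys = ys.length := by
  induction ys with
  | nil => exact levenshtein_nil_nil _
  | cons y ys ih =>
    rw [levenshtein_nil_cons, ih, List.length_cons, Nat.add_comm]
    rfl

theorem levenshtein_defaultCost_nil_right (xs : List α) :
    levenshtein defaultCost xs [] = xs.length := by
  induction xs with
  | nil => exact levenshtein_nil_nil _
  | cons x xs ih =>
    rw [levenshtein_cons_nil, ih, List.length_cons, Nat.add_comm]
    rfl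

end DefaultCost

/-- the edit distance from `w` to the one-run string `α^l` equals
`max(|w|, l) − min(N_α(w), l)`. -/
theorem lev_to_one_run {A : Type*} [DecidableEq A] (w : List A) (l : ℕ) (a : A) :
    levenshtein Levenshtein.defaultCost w (List.replicate l a) =
      max w.length l - min (w.count a) l := by
  induction w generalizing l with
  | nil => simp [levenshtein_defaultCost_nil_left]
  | cons x xs ih =>
    induction l with
    | zero => simp [levenshtein_defaultCost_nil_right]
    | succ n ihl =>
      rw [List.replicate_succ, levenshtein_cons_cons, ← List.replicate_succ,
        ih (n + 1), ihl, ih n]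
      have hcount : xs.count a ≤ xs.length := List.count_le_length
      by_cases hx : x = a
      · subst hx
        simp only [defaultCost, if_pos, List.length_cons, List.count_cons_self]
        omega
      · simp only [defaultCost, if_neg hx, List.length_cons, List.count_cons_of_ne hx]
        omega
end

section
/- Fix k ≥ 2 and an alphabet of size a ≥ 2. For any two distinct strings u, v of length k there exist a character α (even, with α ≠ a−1 if a is odd) or α odd, and an index 1 ≤ j ≤ k with u_j ≠ v_j, such that the pair of two-run strings {α^{j−1}(α+1)^{k−j+1}, α^{j}(α+1)^{k−j}} (for α even equal to u_j), or {(α−1)^{j−1}α^{k−j+1}, (α−1)^{j}α^{k−j}} (for α odd equal to u_j), distinguishes u and v in Hamming distance: the Hamming distances from u and v to at least one string of the pair differ. -/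
/-!
The two strings of a pair differ only at the mismatch position `j`, so for any string `w` the
difference of its distances to them is `[w_j ≠ ε] - [w_j ≠ δ]`, where `δ, ε` are the letters
of the pair. If `u_j ∈ {δ, ε}` and `v_j ≠ u_j`, these differences are different for `u` and `v`,
so one of the two strings distinguishes them. It remains to choose `{δ, ε}` among the admissible
pairs `{α, α + 1}` (`α` even) and `{α - 1, α}` (`α` odd) to contain `u_j` or `v_j`: an odd
mismatched letter always works, and of two distinct even letters the smaller one is not `a - 1`.
-/

/-- Hamming distance between two lists (number of mismatched positions). -/
def hammingDistL {α : Type*} [DecidableEq α] (u v : List α) : ℕ :=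
  (u.zip v).countP (fun p => p.1 ≠ p.2)

lemma List.take_append_getD_cons_drop {β : Type*} {l : List β} {j : ℕ} (hj : j < l.length)
    (x₀ : β) :
    l.take j ++ l.getD j x₀ :: l.drop (j + 1) = l := by
  rw [List.getD_eq_getElem l x₀ hj, ← List.drop_eq_getElem_cons hj, List.take_append_drop]

lemma List.exists_getD_ne_of_ne {β : Type*} {u v : List β} (h : u.length = v.length)
    (huv : u ≠ v) (x₀ : β) :
    ∃ j < u.length, u.getD j x₀ ≠ v.getD j x₀ := by
  by_contra! hall
  refine huv (List.ext_getElem h fun i hiu hiv => ?_)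
  simpa only [List.getD_eq_getElem _ _ hiu, List.getD_eq_getElem _ _ hiv] using hall i hiu

lemma List.getD_mem {β : Type*} {l : List β} {j : ℕ} (hj : j < l.length) (x₀ : β) :
    l.getD j x₀ ∈ l :=
  List.getD_eq_getElem l x₀ hj ▸ List.getElem_mem hj

def twoRunPair {β : Type*} (j k : ℕ) (δ ε : β) : Set (List β) :=
  {List.replicate j δ ++ List.replicate (k - j) ε,
    List.replicate (j + 1) δ ++ List.replicate (k - j - 1) ε}

section

variable {β : Type*} [DecidableEq β]

@[simp]
lemma hammingDistL_cons (a b : β) (x y : List β) :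
    hammingDistL (a :: x) (b :: y) = hammingDistL x y + if a = b then 0 else 1 := by
  simp [hammingDistL, List.countP_cons]

lemma hammingDistL_append {x₁ y₁ : List β} (x₂ y₂ : List β) (h : x₁.length = y₁.length) :
    hammingDistL (x₁ ++ x₂) (y₁ ++ y₂) = hammingDistL x₁ y₁ + hammingDistL x₂ y₂ := by
  simp only [hammingDistL, List.zip_append h, List.countP_append]

lemma hammingDistL_ne_or_of_append_cons {x₁ x₂ y₁ y₂ p q : List β} {c d δ ε : β}
    (hx : x₁.length = p.length) (hy : y₁.length = p.length) (hδε : δ ≠ ε)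
    (hc : c = δ ∨ c = ε) (hcd : c ≠ d) :
    hammingDistL (x₁ ++ c :: x₂) (p ++ δ :: q) ≠ hammingDistL (y₁ ++ d :: y₂) (p ++ δ :: q) ∨
      hammingDistL (x₁ ++ c :: x₂) (p ++ ε :: q) ≠ hammingDistL (y₁ ++ d :: y₂) (p ++ ε :: q) := by
  rw [hammingDistL_append _ _ hx, hammingDistL_append _ _ hy, hammingDistL_append _ _ hx,
    hammingDistL_append _ _ hy]
  simp only [hammingDistL_cons]
  rcases hc with rfl | rfl <;>
    simp only [hδε, hδε.symm, hcd.symm, ↓reduceIte] <;> split_ifs <;> omega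

lemma exists_mem_twoRunPair_hammingDistL_ne_of_left {u v : List β} {j k : ℕ} {δ ε : β} (x₀ : β)
    (hu : u.length = k) (hv : v.length = k) (hj : j < k) (hne : u.getD j x₀ ≠ v.getD j x₀)
    (hδε : δ ≠ ε) (hc : u.getD j x₀ = δ ∨ u.getD j x₀ = ε) :
    ∃ r ∈ twoRunPair j k δ ε, hammingDistL u r ≠ hammingDistL v r := by
  have hsplit := hammingDistL_ne_or_of_append_cons (x₁ := u.take j) (y₁ := v.take j)
    (p := List.replicate j δ) (x₂ := u.drop (j + 1)) (y₂ := v.drop (j + 1))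
    (q := List.replicate (k - j - 1) ε) (by simp; omega) (by simp; omega) hδε hc hne
  rw [List.take_append_getD_cons_drop (by omega), List.take_append_getD_cons_drop (by omega),
    ← List.replicate_succ, Nat.sub_one_add_one (by omega)] at hsplit
  rcases hsplit with hδ | hε
  · refine ⟨_, Set.mem_insert_of_mem _ rfl, ?_⟩
    rwa [List.replicate_succ', List.append_assoc]
  · exact ⟨_, Set.mem_insert _ _, hε⟩

lemma exists_mem_twoRunPair_hammingDistL_ne {u v : List β} {j k : ℕ} {α δ ε : β} (x₀ : β)
    (hu : u.length = k) (hv : v.length = k) (hj : j < k) (hne : u.getD j x₀ ≠ v.getD j x₀)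
    (hα : α = u.getD j x₀ ∨ α = v.getD j x₀) (hδε : δ ≠ ε) (hαδε : α = δ ∨ α = ε) :
    ∃ r ∈ twoRunPair j k δ ε, hammingDistL u r ≠ hammingDistL v r := by
  rcases hα with rfl | rfl
  · exact exists_mem_twoRunPair_hammingDistL_ne_of_left x₀ hu hv hj hne hδε hαδε
  · obtain ⟨r, hr, hrne⟩ :=
      exists_mem_twoRunPair_hammingDistL_ne_of_left x₀ hv hu hj hne.symm hδε hαδε
    exact ⟨r, hr, hrne.symm⟩

end

lemma Nat.exists_odd_or_even_succ_lt_of_ne {a c d : ℕ} (hc : c < a) (hd : d < a) (hcd : c ≠ d) :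
    ∃ α, (α = c ∨ α = d) ∧ (α % 2 = 1 ∨ α % 2 = 0 ∧ α + 1 < a) := by
  by_cases hc₁ : c % 2 = 1
  · exact ⟨c, .inl rfl, .inl hc₁⟩
  by_cases hd₁ : d % 2 = 1
  · exact ⟨d, .inr rfl, .inl hd₁⟩
  rcases Nat.lt_or_gt_of_ne hcd with hlt | hlt
  · exact ⟨c, .inl rfl, .inr ⟨by omega, by omega⟩⟩
  · exact ⟨d, .inr rfl, .inr ⟨by omega, by omega⟩⟩

theorem two_run_pair_resolves_general (a k : ℕ)
    (u v : List ℕ) (hu : u.length = k) (hv : v.length = k)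
    (hua : ∀ c ∈ u, c < a) (hva : ∀ c ∈ v, c < a) (huv : u ≠ v) :
    ∃ j < k, u.getD j 0 ≠ v.getD j 0 ∧
      ∃ α : ℕ, (α = u.getD j 0 ∨ α = v.getD j 0) ∧
      ((α % 2 = 0 ∧ α + 1 < a ∧
        (∃ r ∈ ({List.replicate j α ++ List.replicate (k - j) (α + 1),
                  List.replicate (j + 1) α ++
                    List.replicate (k - j - 1) (α + 1)} : Set (List ℕ)),
          hammingDistL u r ≠ hammingDistL v r)) ∨
      (α % 2 = 1 ∧
        (∃ r ∈ ({List.replicate j (α - 1) ++ List.replicate (k - j) α,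
                  List.replicate (j + 1) (α - 1) ++
                    List.replicate (k - j - 1) α} : Set (List ℕ)),
          hammingDistL u r ≠ hammingDistL v r))) := by
  obtain ⟨j, hj, hne⟩ := List.exists_getD_ne_of_ne (hu.trans hv.symm) huv 0
  rw [hu] at hj
  have hua_j : u.getD j 0 < a := hua _ (List.getD_mem (by omega) 0)
  have hva_j : v.getD j 0 < a := hva _ (List.getD_mem (by omega) 0)
  obtain ⟨α, hα, hparity⟩ := Nat.exists_odd_or_even_succ_lt_of_ne hua_j hva_j hne
  refine ⟨j, hj, hne, α, hα, ?_⟩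
  rcases hparity with hodd | ⟨heven, hlt⟩
  · exact .inr ⟨hodd,
      exists_mem_twoRunPair_hammingDistL_ne 0 hu hv hj hne hα (by omega) (.inr rfl)⟩
  · exact .inl ⟨heven, hlt,
      exists_mem_twoRunPair_hammingDistL_ne 0 hu hv hj hne hα (by omega) (.inl rfl)⟩

/-- for distinct strings `u ≠ v` of length `k ≥ 2` over the alphabet
`{0,…,a−1}` (`a ≥ 2`) there are a mismatch position `j` (0-indexed) and a character
`α` equal to the mismatched character of one of the two strings (WLOG `u_j`), such
that a pair of two-run strings distinguishes `u` and `v` in Hamming distance: if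
`α` is even (with `α + 1 < a`, i.e. `α ≠ a−1` when `a` is odd) the pair is
`{α^j (α+1)^(k−j), α^(j+1) (α+1)^(k−j−1)}`, and if `α` is odd the pair is
`{(α−1)^j α^(k−j), (α−1)^(j+1) α^(k−j−1)}`. -/
theorem two_run_pair_resolves (a k : ℕ) (ha : 2 ≤ a) (hk : 2 ≤ k)
    (u v : List ℕ) (hu : u.length = k) (hv : v.length = k)
    (hua : ∀ c ∈ u, c < a) (hva : ∀ c ∈ v, c < a) (huv : u ≠ v) :
    ∃ j < k, u.getD j 0 ≠ v.getD j 0 ∧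
      ∃ α : ℕ, (α = u.getD j 0 ∨ α = v.getD j 0) ∧
      ((α % 2 = 0 ∧ α + 1 < a ∧
        (∃ r ∈ ({List.replicate j α ++ List.replicate (k - j) (α + 1),
                  List.replicate (j + 1) α ++
                    List.replicate (k - j - 1) (α + 1)} : Set (List ℕ)),
          hammingDistL u r ≠ hammingDistL v r)) ∨
      (α % 2 = 1 ∧
        (∃ r ∈ ({List.replicate j (α - 1) ++ List.replicate (k - j) α,
                  List.replicate (j + 1) (α - 1) ++
                    List.replicate (k - j - 1) α} : Set (List ℕ)),
          hammingDistL u r ≠ hammingDistL v r))) :=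
  two_run_pair_resolves_general a k u v hu hv hua hva huv
end

section
/- The set R_{k,a} = ⋃_{n=0}^{⌊a/2⌋−1} { (2n)^i (2n+1)^{k−i} : 0 ≤ i ≤ k } of two-run strings resolves all pairs of distinct strings of length k under the Hamming distance: for any distinct u, v of length k over {0,…,a−1} there exists r ∈ R_{k,a} with h(u,r) ≠ h(v,r). -/
section Hamming

variable {α : Type*} [DecidableEq α]

theorem hammingDistL_cons_s17 (c z : α) (s t : List α) :
    hammingDistL (c :: s) (z :: t) = hammingDistL s t + if c ≠ z then 1 else 0 := by
  by_cases h : c = z <;> simp [hammingDistL, h]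

theorem hammingDistL_append_s17 {p q : List α} (h : p.length = q.length) (s t : List α) :
    hammingDistL (p ++ s) (q ++ t) = hammingDistL p q + hammingDistL s t := by
  simp only [hammingDistL, List.zip_append h, List.countP_append]

theorem hammingDistL_twoRun_succ_add {u : List α} {k i : ℕ} (hu : u.length = k) (hi : i < k)
    (x y : α) :
    hammingDistL u (List.replicate (i + 1) x ++ List.replicate (k - (i + 1)) y)
        + (if u[i] ≠ y then 1 else 0) =
      hammingDistL u (List.replicate i x ++ List.replicate (k - i) y)
        + (if u[i] ≠ x then 1 else 0) := by
  have hprefix : (u.take i).length = (List.replicate i x).length := by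
    simp only [List.length_take, List.length_replicate]; omega
  have hdist (z : α) :
      hammingDistL u (List.replicate i x ++ z :: List.replicate (k - (i + 1)) y) =
        hammingDistL (u.take i) (List.replicate i x)
          + hammingDistL (u.drop (i + 1)) (List.replicate (k - (i + 1)) y)
          + if u[i] ≠ z then 1 else 0 := by
    conv_lhs => rw [← List.take_append_drop i u, List.drop_eq_getElem_cons (by omega)]
    rw [hammingDistL_append_s17 hprefix, hammingDistL_cons_s17, add_assoc]
  have hright : List.replicate (k - i) y = y :: List.replicate (k - (i + 1)) y := by
    rw [← List.replicate_succ]; congr 1; omega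
  rw [List.replicate_succ', List.append_assoc, List.singleton_append, hright, hdist, hdist]
  omega

end Hamming

theorem eq_of_forall_pair_balance {a c d : ℕ} (hc : c < a) (hd : d < a)
    (hbal : ∀ n < a / 2,
      (if c ≠ 2 * n then 1 else 0) + (if d ≠ 2 * n + 1 then 1 else 0) =
        (if c ≠ 2 * n + 1 then 1 else 0) + (if d ≠ 2 * n then 1 else 0)) :
    c = d := by
  by_cases hc' : c < 2 * (a / 2)
  · have h := hbal (c / 2) (by omega)
    split_ifs at h <;> omega
  · by_cases hd' : d < 2 * (a / 2)
    · have h := hbal (d / 2) (by omega)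
      split_ifs at h <;> omega
    · omega

theorem two_run_set_resolves_general (a k : ℕ)
    (u v : List ℕ) (hu : u.length = k) (hv : v.length = k)
    (hua : ∀ c ∈ u, c < a) (hva : ∀ c ∈ v, c < a) (huv : u ≠ v) :
    ∃ n < a / 2, ∃ i ≤ k,
      hammingDistL u (List.replicate i (2 * n) ++ List.replicate (k - i) (2 * n + 1)) ≠
      hammingDistL v (List.replicate i (2 * n) ++ List.replicate (k - i) (2 * n + 1)) := by
  by_contra! hsame
  refine huv (List.ext_getElem (by omega) fun i hiu hiv => ?_)
  have hik : i < k := by omega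
  refine eq_of_forall_pair_balance (hua _ (List.getElem_mem hiu)) (hva _ (List.getElem_mem hiv))
    fun n hn => ?_
  have hu_step := hammingDistL_twoRun_succ_add hu hik (2 * n) (2 * n + 1)
  have hv_step := hammingDistL_twoRun_succ_add hv hik (2 * n) (2 * n + 1)
  have h_at_i := hsame n hn i hik.le
  have h_at_succ := hsame n hn (i + 1) hik
  omega

/-- the set `R_{k,a} = ⋃_{n=0}^{⌊a/2⌋−1} {(2n)^i (2n+1)^{k−i} : 0 ≤ i ≤ k}`
resolves all pairs of distinct strings of length `k` over `{0,…,a−1}` (`a ≥ 2`)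
under the Hamming distance. -/
theorem two_run_set_resolves (a k : ℕ) (ha : 2 ≤ a)
    (u v : List ℕ) (hu : u.length = k) (hv : v.length = k)
    (hua : ∀ c ∈ u, c < a) (hva : ∀ c ∈ v, c < a) (huv : u ≠ v) :
    ∃ n < a / 2, ∃ i ≤ k,
      hammingDistL u (List.replicate i (2 * n) ++ List.replicate (k - i) (2 * n + 1)) ≠
      hammingDistL v (List.replicate i (2 * n) ++ List.replicate (k - i) (2 * n + 1)) :=
  two_run_set_resolves_general a k u v hu hv hua hva huv
end
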